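/- The improper integral ∫₀^∞ (1 − exp(−ψ(ζ))) dζ converges and equals 2√2·B/(√(8 + B²) + 2√2 + B). -/

import Mathlib

/-!
With `u = (ζ + c)/√2` one has `e^{-ψ} = tanh² u`, so the integrand is `sech² u`, the derivative
of `√2 tanh u`. Since `tanh → 1`, the integral is `√2 (1 - tanh (c/√2))`, and `c/√2` is half of
`arsinh (2√2/B)`, so the half-argument formula `tanh (y/2) = sinh y / (cosh y + 1)` turns this
into the closed form.
-/

open Real Set Filter MeasureTheory

/-- The paper's explicit Debye-layer solution for positive scaled wall charge
`B > 0`: `ψ(ζ) = 2 log(coth((ζ + c)/√2))` with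
`c = (1/√2)·arsinh(2√2/B)`, written with `coth = cosh/sinh`. -/
noncomputable def psiDpos (B ζ : ℝ) : ℝ :=
  2 * Real.log
    (Real.cosh ((ζ + (1 / Real.sqrt 2) * Real.arsinh (2 * Real.sqrt 2 / B)) / Real.sqrt 2) /
     Real.sinh ((ζ + (1 / Real.sqrt 2) * Real.arsinh (2 * Real.sqrt 2 / B)) / Real.sqrt 2))

open Topology

namespace Real

theorem one_sub_tanh_sq (x : ℝ) : 1 - tanh x ^ 2 = (cosh x ^ 2)⁻¹ := by
  have := (cosh_pos x).ne'
  rw [tanh_eq_sinh_div_cosh, div_pow]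
  field_simp
  linear_combination cosh_sq_sub_sinh_sq x

theorem hasDerivAt_tanh (x : ℝ) : HasDerivAt tanh (cosh x ^ 2)⁻¹ x := by
  have h := (hasDerivAt_sinh x).div (hasDerivAt_cosh x) (cosh_pos x).ne'
  rw [show tanh = sinh / cosh from funext tanh_eq_sinh_div_cosh]
  refine h.congr_deriv ?_
  rw [← sq, ← sq, cosh_sq_sub_sinh_sq, one_div]

theorem tanh_eq_one_sub_two_div (x : ℝ) : tanh x = 1 - 2 / (exp (2 * x) + 1) := by
  have h : exp (2 * x) = exp x * exp x := by rw [← exp_add]; ring_nf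
  rw [tanh_eq, exp_neg, h]
  field_simp
  ring

theorem tendsto_tanh_atTop : Tendsto tanh atTop (𝓝 1) := by
  have h : Tendsto (fun x : ℝ => exp (2 * x) + 1) atTop atTop :=
    tendsto_atTop_add_const_right _ 1
      (tendsto_exp_atTop.comp (tendsto_id.const_mul_atTop two_pos))
  simpa [funext tanh_eq_one_sub_two_div] using
    (tendsto_const_nhds (x := (1 : ℝ))).sub (tendsto_const_nhds.div_atTop h)

theorem tanh_half (x : ℝ) : tanh (x / 2) = sinh x / (cosh x + 1) := by
  have := (cosh_pos (x / 2)).ne'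
  rw [tanh_eq_sinh_div_cosh]
  conv_rhs => rw [← mul_div_cancel₀ x (two_ne_zero' ℝ), sinh_two_mul, cosh_two_mul]
  field_simp
  linear_combination -sinh (x / 2) * cosh_sq_sub_sinh_sq (x / 2)

theorem tanh_half_arsinh (x : ℝ) : tanh (arsinh x / 2) = x / (√(1 + x ^ 2) + 1) := by
  rw [tanh_half, sinh_arsinh, cosh_arsinh]

/-- No sign condition on `u` is needed, since `Real.log` only sees `|coth u|`. -/
theorem exp_neg_two_mul_log_coth {u : ℝ} (hu : u ≠ 0) :
    exp (-(2 * log (cosh u / sinh u))) = tanh u ^ 2 := by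
  have ht : tanh u ≠ 0 := by
    rw [tanh_eq_sinh_div_cosh]; exact div_ne_zero (sinh_ne_zero.2 hu) (cosh_pos u).ne'
  rw [← mul_neg, ← log_inv, inv_div, ← tanh_eq_sinh_div_cosh,
    show (2 : ℝ) = (2 : ℕ) by norm_num, ← log_pow]
  exact exp_log (by positivity)

theorem hasDerivAt_mul_tanh_add_div {a : ℝ} (ha : a ≠ 0) (c x : ℝ) :
    HasDerivAt (fun x => a * tanh ((x + c) / a)) (cosh ((x + c) / a) ^ 2)⁻¹ x := by
  have h := ((hasDerivAt_tanh _).comp x (((hasDerivAt_id x).add_const c).div_const a)).const_mul a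
  refine h.congr_deriv ?_
  simp only [id]
  field_simp

end Real

/-- The constant `c` of the paper, so that `psiDpos B ζ = 2 log coth ((ζ + debyeOffset B) / √2)`. -/
noncomputable def debyeOffset (B : ℝ) : ℝ := (1 / √2) * arsinh (2 * √2 / B)

theorem debyeOffset_pos {B : ℝ} (hB : 0 < B) : 0 < debyeOffset B :=
  mul_pos (by positivity) (arsinh_pos_iff.2 (by positivity))

theorem debyeOffset_div_sqrt_two (B : ℝ) : debyeOffset B / √2 = arsinh (2 * √2 / B) / 2 := by
  rw [debyeOffset]
  field_simp
  rw [sq_sqrt zero_le_two]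

theorem one_sub_exp_neg_psiDpos {B ζ : ℝ} (hB : 0 < B) (hζ : 0 ≤ ζ) :
    1 - exp (-psiDpos B ζ) = (cosh ((ζ + debyeOffset B) / √2) ^ 2)⁻¹ := by
  have hu : (ζ + debyeOffset B) / √2 ≠ 0 := by
    have := debyeOffset_pos hB
    positivity
  rw [psiDpos, ← debyeOffset, exp_neg_two_mul_log_coth hu, one_sub_tanh_sq]

theorem sqrt_two_mul_one_sub_tanh_debyeOffset {B : ℝ} (hB : 0 < B) :
    √2 * (1 - tanh (debyeOffset B / √2)) = 2 * √2 * B / (√(8 + B ^ 2) + 2 * √2 + B) := by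
  have h2 : √2 ^ 2 = 2 := sq_sqrt zero_le_two
  have hS : √(8 + B ^ 2) ^ 2 = 8 + B ^ 2 := sq_sqrt (by positivity)
  have hroot : √(1 + (2 * √2 / B) ^ 2) = √(8 + B ^ 2) / B := by
    have : 1 + (2 * √2 / B) ^ 2 = (8 + B ^ 2) / B ^ 2 := by
      field_simp
      linear_combination 4 * h2
    rw [this, sqrt_div' _ (sq_nonneg B), sqrt_sq hB.le]
  rw [debyeOffset_div_sqrt_two, tanh_half_arsinh, hroot]
  field_simp
  linear_combination hS - 4 * h2

/-- The Debye-layer correction integral for `G₁`: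
`∫₀^∞ (1 - e^{-ψ(ζ)}) dζ = 2√2·B/(√(8+B²) + 2√2 + B)`. -/
theorem stmt_8 (B : ℝ) (hB : 0 < B) :
    IntegrableOn (fun ζ => 1 - Real.exp (-psiDpos B ζ)) (Set.Ioi 0) ∧
    (∫ ζ in Set.Ioi (0:ℝ), (1 - Real.exp (-psiDpos B ζ))) =
      2 * Real.sqrt 2 * B / (Real.sqrt (8 + B ^ 2) + 2 * Real.sqrt 2 + B) := by
  set F : ℝ → ℝ := fun ζ => √2 * tanh ((ζ + debyeOffset B) / √2)
  have hderiv : ∀ ζ ∈ Ici 0, HasDerivAt F (1 - exp (-psiDpos B ζ)) ζ := fun ζ hζ => by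
    rw [one_sub_exp_neg_psiDpos hB hζ]
    exact hasDerivAt_mul_tanh_add_div (by positivity) _ ζ
  have hnonneg : ∀ ζ ∈ Ioi 0, 0 ≤ 1 - exp (-psiDpos B ζ) := fun ζ hζ => by
    rw [one_sub_exp_neg_psiDpos hB hζ.out.le]
    positivity
  have hlim : Tendsto F atTop (𝓝 (√2 * 1)) :=
    (tendsto_tanh_atTop.comp ((tendsto_atTop_add_const_right _ _ tendsto_id).atTop_div_const
      (by positivity))).const_mul _
  refine ⟨integrableOn_Ioi_deriv_of_nonneg' hderiv hnonneg hlim, ?_⟩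
  rw [integral_Ioi_of_hasDerivAt_of_nonneg' hderiv hnonneg hlim,
    ← sqrt_two_mul_one_sub_tanh_debyeOffset hB]
  simp only [F, zero_add]
  ring
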